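/- Let (M, d) be a compact metric space, μ a Borel probability measure on M, and λ > 1. Then there exists a sequence P_1 ≤ P_2 ≤ ⋯ of finite partitions of M into Borel sets, each refining the previous one, such that: (i) every atom of every P_n is (λ, μ)-regular; and (ii) every atom of P_n has diameter at most 2^{-n}. Consequently the partitions P_n jointly separate points of M, i.e. ⋁_{n≥1} P_n is the partition of M into points. -/

import Mathlib

/-! For a fixed center `x`, Fubini gives `∫ μ {y | |d(y, x) - r| < ρ} dr = 2ρ`, and the
`ρ`-neighbourhood of the frontier of `ball x r` lies in that annulus; summing over
`ρ = λ^{-n}` shows that `ball x r` is `(λ, μ)`-regular for almost every radius `r`.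
Since the frontier of a Boolean combination of sets lies in the union of their frontiers,
regular sets are closed under finite Boolean operations, so disjointifying a finite cover
of `M` by small regular balls yields a regular partition of mesh `≤ ε`. Successive common
refinements of such partitions of mesh `2^{-n}` form the required sequence, and a mesh
tending to `0` separates points. -/

open MeasureTheory

/-- A Borel set `A` is `(λ, μ)`-regular if `∑_{n ≥ 1} μ (∂_{λ^{-n}} A) < ∞`, where
`∂_ρ A` is the open `ρ`-neighborhood of the topological frontier of `A`. -/
def LambdaMuRegular {M : Type*} [MetricSpace M] [MeasurableSpace M]
    (μ : Measure M) (lam : ℝ) (A : Set M) : Prop :=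
  ∑' n : ℕ, μ (Metric.thickening (lam ^ (-((n : ℤ) + 1))) (frontier A)) < ⊤

open Metric Set
open scoped ENNReal

section Regularity

variable {M : Type*} [MetricSpace M] [MeasurableSpace M] {μ : Measure M} {lam : ℝ}
  {A B C : Set M}

lemma LambdaMuRegular.of_frontier_subset (h : frontier A ⊆ frontier B)
    (hB : LambdaMuRegular μ lam B) : LambdaMuRegular μ lam A :=
  (ENNReal.tsum_le_tsum fun _ => measure_mono (thickening_subset_of_subset _ h)).trans_lt hB

lemma LambdaMuRegular.of_frontier_subset_union (h : frontier A ⊆ frontier B ∪ frontier C)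
    (hB : LambdaMuRegular μ lam B) (hC : LambdaMuRegular μ lam C) : LambdaMuRegular μ lam A := by
  refine (ENNReal.tsum_le_tsum fun n => ?_).trans_lt
    (ENNReal.tsum_add.symm ▸ ENNReal.add_lt_top.2 ⟨hB, hC⟩)
  exact (measure_mono ((thickening_subset_of_subset _ h).trans (thickening_union _ _ _).subset)).trans
    (measure_union_le _ _)

lemma lambdaMuRegular_empty : LambdaMuRegular μ lam (∅ : Set M) := by
  simp [LambdaMuRegular]

lemma LambdaMuRegular.inter (hA : LambdaMuRegular μ lam A) (hB : LambdaMuRegular μ lam B) :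
    LambdaMuRegular μ lam (A ∩ B) :=
  .of_frontier_subset_union ((frontier_inter_subset A B).trans
    (union_subset_union inter_subset_left inter_subset_right)) hA hB

lemma LambdaMuRegular.union (hA : LambdaMuRegular μ lam A) (hB : LambdaMuRegular μ lam B) :
    LambdaMuRegular μ lam (A ∪ B) :=
  .of_frontier_subset_union ((frontier_union_subset A B).trans
    (union_subset_union inter_subset_left inter_subset_right)) hA hB

lemma LambdaMuRegular.compl (hA : LambdaMuRegular μ lam A) : LambdaMuRegular μ lam Aᶜ :=
  .of_frontier_subset (frontier_compl A).subset hA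

lemma LambdaMuRegular.diff (hA : LambdaMuRegular μ lam A) (hB : LambdaMuRegular μ lam B) :
    LambdaMuRegular μ lam (A \ B) :=
  hA.inter hB.compl

lemma lambdaMuRegular_finset_sup {ι : Type*} {s : Finset ι} {f : ι → Set M}
    (hf : ∀ i ∈ s, LambdaMuRegular μ lam (f i)) : LambdaMuRegular μ lam (s.sup f) := by
  classical
  induction s using Finset.induction_on with
  | empty => exact lambdaMuRegular_empty
  | insert i s _ ih =>
    rw [Finset.sup_insert]
    exact (hf i (Finset.mem_insert_self i s)).union
      (ih fun j hj => hf j (Finset.mem_insert_of_mem hj))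

end Regularity

section Partition

variable {M : Type*} [MetricSpace M] [MeasurableSpace M] {μ : Measure M} {lam : ℝ}
  {ι κ : Type*}

structure IsRegularPartition (μ : Measure M) (lam : ℝ) (P : ι → Set M) : Prop where
  measurableSet : ∀ i, MeasurableSet (P i)
  pairwise_disjoint : Pairwise (Function.onFun Disjoint P)
  iUnion_eq_univ : ⋃ i, P i = univ
  lambdaMuRegular : ∀ i, LambdaMuRegular μ lam (P i)

namespace IsRegularPartition

variable {P : ι → Set M} {Q : κ → Set M}

lemma inf (hP : IsRegularPartition μ lam P) (hQ : IsRegularPartition μ lam Q) :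
    IsRegularPartition μ lam fun p : ι × κ => P p.1 ∩ Q p.2 where
  measurableSet p := (hP.measurableSet p.1).inter (hQ.measurableSet p.2)
  pairwise_disjoint := by
    rintro ⟨i, j⟩ ⟨i', j'⟩ hne
    by_cases hi : i = i'
    · have hj : j ≠ j' := fun hj => hne (by rw [hi, hj])
      exact (hQ.pairwise_disjoint hj).mono inter_subset_right inter_subset_right
    · exact (hP.pairwise_disjoint hi).mono inter_subset_left inter_subset_left
  iUnion_eq_univ := eq_univ_of_forall fun x => by
    obtain ⟨i, hi⟩ := mem_iUnion.1 (hP.iUnion_eq_univ ▸ mem_univ x)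
    obtain ⟨j, hj⟩ := mem_iUnion.1 (hQ.iUnion_eq_univ ▸ mem_univ x)
    exact mem_iUnion.2 ⟨(i, j), hi, hj⟩
  lambdaMuRegular p := (hP.lambdaMuRegular p.1).inter (hQ.lambdaMuRegular p.2)

lemma comp_equiv (hP : IsRegularPartition μ lam P) (e : κ ≃ ι) :
    IsRegularPartition μ lam (P ∘ e) where
  measurableSet k := hP.measurableSet (e k)
  pairwise_disjoint := hP.pairwise_disjoint.comp_of_injective e.injective
  iUnion_eq_univ := (e.surjective.iUnion_comp P).trans hP.iUnion_eq_univ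
  lambdaMuRegular k := hP.lambdaMuRegular (e k)

end IsRegularPartition

lemma isRegularPartition_disjointed [LinearOrder ι] [LocallyFiniteOrderBot ι] {B : ι → Set M}
    (hmeas : ∀ i, MeasurableSet (B i)) (hcover : ⋃ i, B i = univ)
    (hreg : ∀ i, LambdaMuRegular μ lam (B i)) : IsRegularPartition μ lam (disjointed B) where
  measurableSet i := by
    rw [disjointed_apply, Finset.sup_set_eq_biUnion]
    exact (hmeas i).diff (Finset.measurableSet_biUnion _ fun j _ => hmeas j)
  pairwise_disjoint := disjoint_disjointed B
  iUnion_eq_univ := iUnion_disjointed.trans hcover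
  lambdaMuRegular i := (hreg i).diff (lambdaMuRegular_finset_sup fun j _ => hreg j)

end Partition

section Balls

lemma lintegral_measure_dist_lt {α : Type*} [MeasurableSpace α] (μ : Measure α) [SFinite μ]
    {f : α → ℝ} (hf : Measurable f) (ρ : ℝ) :
    ∫⁻ r, μ {y | dist r (f y) < ρ} = ENNReal.ofReal (2 * ρ) * μ univ := by
  have hS : MeasurableSet {p : α × ℝ | dist p.2 (f p.1) < ρ} :=
    measurableSet_lt (measurable_snd.dist (hf.comp measurable_fst)) measurable_const
  calc ∫⁻ r, μ {y | dist r (f y) < ρ}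
      = μ.prod volume {p : α × ℝ | dist p.2 (f p.1) < ρ} := (Measure.prod_apply_symm hS).symm
    _ = ∫⁻ y, volume (ball (f y) ρ) ∂μ := Measure.prod_apply hS
    _ = ENNReal.ofReal (2 * ρ) * μ univ := by simp only [Real.volume_ball, lintegral_const]

lemma ae_tsum_measure_dist_lt_lt_top {α : Type*} [MeasurableSpace α] (μ : Measure α)
    [IsFiniteMeasure μ] {f : α → ℝ} (hf : Measurable f) {ρ : ℕ → ℝ} (hρ₀ : ∀ n, 0 ≤ ρ n)
    (hρ : Summable ρ) : ∀ᵐ r, ∑' n, μ {y | dist r (f y) < ρ n} < ∞ := by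
  have hmeas (n : ℕ) : Measurable fun r => μ {y | dist r (f y) < ρ n} :=
    measurable_measure_prodMk_right
      (measurableSet_lt (measurable_snd.dist (hf.comp measurable_fst)) measurable_const)
  refine ae_lt_top (.tsum hmeas) ?_
  rw [lintegral_tsum fun n => (hmeas n).aemeasurable]
  simp only [lintegral_measure_dist_lt μ hf, ENNReal.tsum_mul_right,
    ← ENNReal.ofReal_tsum_of_nonneg (fun n => mul_nonneg zero_le_two (hρ₀ n)) (hρ.mul_left 2)]
  exact ENNReal.mul_ne_top ENNReal.ofReal_ne_top (measure_ne_top μ univ)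

variable {M : Type*} [MetricSpace M]

lemma thickening_frontier_ball_subset (x : M) (r ρ : ℝ) :
    thickening ρ (frontier (ball x r)) ⊆ {y | dist r (dist y x) < ρ} := by
  intro y hy
  obtain ⟨z, hz, hyz⟩ := mem_thickening_iff.1 hy
  have hzx : dist z x = r := frontier_ball_subset_sphere hz
  calc dist r (dist y x) = |dist y x - dist z x| := by rw [hzx, Real.dist_eq, abs_sub_comm]
    _ ≤ dist y z := abs_dist_sub_le y z x
    _ < ρ := hyz

lemma ae_lambdaMuRegular_ball [MeasurableSpace M] [OpensMeasurableSpace M] (μ : Measure M)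
    [IsFiniteMeasure μ] {lam : ℝ} (hlam : 1 < lam) (x : M) :
    ∀ᵐ r, LambdaMuRegular μ lam (ball x r) := by
  have hρ : Summable fun n : ℕ => lam ^ (-((n : ℤ) + 1)) := by
    have h (n : ℕ) : lam ^ (-((n : ℤ) + 1)) = lam⁻¹ * lam⁻¹ ^ n := by
      rw [← pow_succ', inv_pow, ← zpow_natCast, ← zpow_neg]
      push_cast
      rfl
    simpa only [h] using (summable_geometric_of_lt_one (by positivity)
      (inv_lt_one_of_one_lt₀ hlam)).mul_left lam⁻¹
  filter_upwards [ae_tsum_measure_dist_lt_lt_top μ (continuous_id.dist continuous_const).measurable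
    (fun n => (zpow_pos (by linarith) _).le) hρ] with r hr
  exact (ENNReal.tsum_le_tsum fun n =>
    measure_mono (thickening_frontier_ball_subset x r _)).trans_lt hr

end Balls

lemma exists_isRegularPartition_diam_le {M : Type*} [MetricSpace M] [CompactSpace M]
    [MeasurableSpace M] [OpensMeasurableSpace M] (μ : Measure M) [IsFiniteMeasure μ] {lam : ℝ}
    (hlam : 1 < lam) {ε : ℝ} (hε : 0 < ε) :
    ∃ (k : ℕ) (P : Fin k → Set M), IsRegularPartition μ lam P ∧ ∀ i, diam (P i) ≤ ε := by
  have hball (x : M) : ∃ r ∈ Ioo 0 (ε / 2), LambdaMuRegular μ lam (ball x r) := by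
    have : (ae (volume.restrict (Ioo 0 (ε / 2)))).NeBot := ae_restrict_neBot.2 (by simp [hε])
    exact ((ae_restrict_mem measurableSet_Ioo).and
      (ae_restrict_of_ae (ae_lambdaMuRegular_ball μ hlam x))).exists
  choose rad hrad hreg using hball
  obtain ⟨t, ht⟩ := isCompact_univ.elim_finite_subcover (fun x => ball x (rad x))
    (fun _ => isOpen_ball) fun x _ => mem_iUnion.2 ⟨x, mem_ball_self (hrad x).1⟩
  let c : Fin t.card → M := fun i => t.equivFin.symm i
  let B : Fin t.card → Set M := fun i => ball (c i) (rad (c i))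
  have hcover : ⋃ i, B i = univ := eq_univ_of_forall fun y => by
    obtain ⟨x, hx, hy⟩ := mem_iUnion₂.1 (ht (mem_univ y))
    exact mem_iUnion.2 ⟨t.equivFin ⟨x, hx⟩, by simpa [B, c] using hy⟩
  refine ⟨t.card, disjointed B,
    isRegularPartition_disjointed (fun _ => measurableSet_ball) hcover fun i => hreg _, fun i => ?_⟩
  calc diam (disjointed B i) ≤ diam (B i) := diam_mono (disjointed_subset B i) isBounded_ball
    _ ≤ 2 * rad (c i) := diam_ball (hrad _).1.le
    _ ≤ ε := by linarith [(hrad (c i)).2]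

section CommonRefinement

variable {M : Type*} {k : ℕ → ℕ}

def commonRefinement (Q : (n : ℕ) → Fin (k n) → Set M) : (n : ℕ) → Σ m, Fin m → Set M
  | 0 => ⟨k 0, Q 0⟩
  | n + 1 => ⟨(commonRefinement Q n).1 * k (n + 1),
      (fun p => (commonRefinement Q n).2 p.1 ∩ Q (n + 1) p.2) ∘ finProdFinEquiv.symm⟩

variable (Q : (n : ℕ) → Fin (k n) → Set M)

lemma commonRefinement_succ_subset (n : ℕ) (i : Fin (commonRefinement Q (n + 1)).1) :
    ∃ j, (commonRefinement Q (n + 1)).2 i ⊆ (commonRefinement Q n).2 j :=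
  ⟨_, inter_subset_left⟩

lemma exists_commonRefinement_subset (n : ℕ) (i : Fin (commonRefinement Q n).1) :
    ∃ j, (commonRefinement Q n).2 i ⊆ Q n j := by
  cases n with
  | zero => exact ⟨i, subset_rfl⟩
  | succ n => exact ⟨_, inter_subset_right⟩

lemma isRegularPartition_commonRefinement [MetricSpace M] [MeasurableSpace M] {μ : Measure M}
    {lam : ℝ} (hQ : ∀ n, IsRegularPartition μ lam (Q n)) (n : ℕ) :
    IsRegularPartition μ lam (commonRefinement Q n).2 := by
  induction n with
  | zero => exact hQ 0
  | succ n ih => exact (ih.inf (hQ (n + 1))).comp_equiv finProdFinEquiv.symm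

end CommonRefinement

lemma eq_of_forall_dist_le_two_zpow_neg {M : Type*} [MetricSpace M] {x y : M}
    (h : ∀ n : ℕ, dist x y ≤ (2 : ℝ) ^ (-(n : ℤ))) : x = y := by
  refine eq_of_forall_dist_le fun ε hε => ?_
  obtain ⟨n, hn⟩ := exists_pow_lt_of_lt_one hε (by norm_num : (2⁻¹ : ℝ) < 1)
  exact (h n).trans (by simpa [zpow_neg, inv_pow] using hn.le)

/-- On a compact metric space with a Borel probability measure `μ` and
`λ > 1`, there is an increasing (refining) sequence of finite Borel partitions `P n`, all
of whose atoms are `(λ, μ)`-regular and of diameter at most `2^{-n}`; consequently the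
partitions jointly separate points. -/
theorem exists_refining_lambdaMuRegular_partitions
    {M : Type*} [MetricSpace M] [CompactSpace M] [MeasurableSpace M] [BorelSpace M]
    (μ : Measure M) [IsProbabilityMeasure μ] (lam : ℝ) (hlam : 1 < lam) :
    ∃ (m : ℕ → ℕ) (P : (n : ℕ) → Fin (m n) → Set M),
      (∀ n i, MeasurableSet (P n i)) ∧
      (∀ n, Pairwise (Function.onFun Disjoint (P n))) ∧
      (∀ n, (⋃ i, P n i) = Set.univ) ∧
      (∀ n i, LambdaMuRegular μ lam (P n i)) ∧
      (∀ n i, Metric.diam (P n i) ≤ (2 : ℝ) ^ (-(n : ℤ))) ∧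
      (∀ n i, ∃ j, P (n + 1) i ⊆ P n j) ∧
      (∀ x y : M, (∀ n i, x ∈ P n i → y ∈ P n i) → x = y) := by
  choose k Q hQ hQdiam using fun n : ℕ =>
    exists_isRegularPartition_diam_le μ hlam (zpow_pos two_pos (-(n : ℤ)))
  have hP := isRegularPartition_commonRefinement Q hQ
  have hdiam (n : ℕ) (i) : diam ((commonRefinement Q n).2 i) ≤ (2 : ℝ) ^ (-(n : ℤ)) := by
    obtain ⟨j, hj⟩ := exists_commonRefinement_subset Q n i
    exact (diam_mono hj (.all _)).trans (hQdiam n j)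
  refine ⟨fun n => (commonRefinement Q n).1, fun n => (commonRefinement Q n).2,
    fun n => (hP n).measurableSet, fun n => (hP n).pairwise_disjoint,
    fun n => (hP n).iUnion_eq_univ, fun n => (hP n).lambdaMuRegular, hdiam,
    commonRefinement_succ_subset Q, fun x y hxy => eq_of_forall_dist_le_two_zpow_neg fun n => ?_⟩
  obtain ⟨i, hi⟩ := mem_iUnion.1 ((hP n).iUnion_eq_univ ▸ mem_univ x)
  exact (dist_le_diam_of_mem (.all _) hi (hxy n i hi)).trans (hdiam n i)
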